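/- Let m ≤ n and k = m+n-2. Let a_1,...,a_k ∈ ℝ^m and b_1,...,b_k ∈ ℝ^n be in general position, meaning: every m of the a_i are linearly independent (any subset of size ≤ m of the a_i is linearly independent) and every n of the b_j are linearly independent. Then the number of points [x⊗y] ∈ ℙ^{m-1}×ℙ^{n-1} satisfying (a_i^T x)(b_i^T y) = 0 for all i = 1,...,k is exactly C(m+n-2, m-1). -/

import Mathlib

/-!
A solution `([x], [y])` is determined by the set `S` of indices with `aᵢ ⬝ᵥ x = 0`: `x` spans
the common kernel of the `aᵢ` with `i ∈ S`, and `y` that of the `bᵢ` with `i ∉ S`. General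
position gives `|S| ≤ m - 1` and `|Sᶜ| ≤ n - 1`; as `|S| + |Sᶜ| = m + n - 2`, this forces
`|S| = m - 1`. Conversely, for every `S` of size `m - 1` both kernels are lines, so they carry
exactly one solution. Hence solutions correspond to the `(m - 1)`-subsets of the `m + n - 2`
indices.
-/

open Matrix Finset Module
open scoped LinearAlgebra.Projectivization

namespace Projectivization

variable {K V : Type*} [DivisionRing K] [AddCommGroup V] [Module K V]

theorem rep_mem_iff_submodule_eq {W : Submodule K V} (hW : finrank K W = 1) (p : ℙ K V) :
    p.rep ∈ W ↔ p.submodule = W := by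
  have : FiniteDimensional K W := Module.finite_of_finrank_eq_succ hW
  rw [← Submodule.span_singleton_le_iff_mem, ← submodule_eq]
  exact ⟨fun h => Submodule.eq_of_le_of_finrank_eq h (by rw [finrank_submodule, hW]), le_of_eq⟩

theorem existsUnique_rep_mem {W : Submodule K V} (hW : finrank K W = 1) :
    ∃! p : ℙ K V, p.rep ∈ W := by
  simp only [rep_mem_iff_submodule_eq hW]
  exact ⟨mk'' W hW, submodule_mk'' W hW, fun p hp => submodule_injective (by simp [hp])⟩

end Projectivization

variable {K ι α β : Type*} [Field K] [Fintype α] [Fintype β]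

def homogeneousSolutions (a : ι → α → K) (S : Finset ι) : Submodule K (α → K) :=
  LinearMap.ker (Matrix.of fun i : S => a i).mulVecLin

theorem mem_homogeneousSolutions {a : ι → α → K} {S : Finset ι} {x : α → K} :
    x ∈ homogeneousSolutions a S ↔ ∀ i ∈ S, a i ⬝ᵥ x = 0 := by
  simp [homogeneousSolutions, funext_iff, mulVec, Subtype.forall]

theorem finrank_homogeneousSolutions {a : ι → α → K} {S : Finset ι}
    (ha : LinearIndependent K fun i : S => a i) :
    finrank K (homogeneousSolutions a S) = Fintype.card α - #S := by
  have hrank : (Matrix.of fun i : S => a i).rank = #S :=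
    (ha.rank_matrix (M := Matrix.of fun i : S => a i)).trans (Fintype.card_coe S)
  have := LinearMap.finrank_range_add_finrank_ker (Matrix.of fun i : S => a i).mulVecLin
  rw [← Matrix.rank, hrank, Module.finrank_fintype_fun_eq_card] at this
  rw [homogeneousSolutions]
  omega

def InGeneralPosition (a : ι → α → K) : Prop :=
  ∀ S : Finset ι, #S ≤ Fintype.card α → LinearIndependent K fun i : S => a i

theorem finrank_homogeneousSolutions_eq_one {a : ι → α → K} (ha : InGeneralPosition a)
    {S : Finset ι} (hS : #S + 1 = Fintype.card α) :
    finrank K (homogeneousSolutions a S) = 1 := by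
  rw [finrank_homogeneousSolutions (ha S (by omega))]
  omega

theorem finrank_homogeneousSolutions_compl_eq_one [Fintype ι] [DecidableEq ι] {b : ι → β → K}
    (hb : InGeneralPosition b) (hι : Fintype.card ι + 2 = Fintype.card α + Fintype.card β)
    {S : Finset ι} (hS : #S + 1 = Fintype.card α) :
    finrank K (homogeneousSolutions b Sᶜ) = 1 := by
  have := card_le_univ S
  refine finrank_homogeneousSolutions_eq_one hb ?_
  rw [card_compl]
  omega

variable [Fintype ι] [DecidableEq K]

def zeroIndices (a : ι → α → K) (x : α → K) : Finset ι := {i | a i ⬝ᵥ x = 0}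

theorem mem_zeroIndices {a : ι → α → K} {x : α → K} {i : ι} :
    i ∈ zeroIndices a x ↔ a i ⬝ᵥ x = 0 := by
  simp [zeroIndices]

theorem mem_homogeneousSolutions_zeroIndices (a : ι → α → K) (x : α → K) :
    x ∈ homogeneousSolutions a (zeroIndices a x) :=
  mem_homogeneousSolutions.2 fun _ => mem_zeroIndices.1

theorem card_zeroIndices_lt {a : ι → α → K} (ha : InGeneralPosition a) {x : α → K}
    (hx : x ≠ 0) : #(zeroIndices a x) < Fintype.card α := by
  by_contra! h
  obtain ⟨S, hSx, hS⟩ := exists_subset_card_eq h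
  have hxS : x ∈ homogeneousSolutions a S :=
    mem_homogeneousSolutions.2 fun i hi => mem_zeroIndices.1 (hSx hi)
  have hbot : homogeneousSolutions a S = ⊥ := by
    rw [← Submodule.finrank_eq_zero, finrank_homogeneousSolutions (ha S hS.le), hS, Nat.sub_self]
  exact hx ((Submodule.mem_bot K).1 (hbot ▸ hxS))

section Solutions

variable [DecidableEq ι] {a : ι → α → K} {b : ι → β → K}

theorem mem_homogeneousSolutions_compl_zeroIndices {x : α → K} {y : β → K}
    (h : ∀ i, (a i ⬝ᵥ x) * (b i ⬝ᵥ y) = 0) :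
    y ∈ homogeneousSolutions b (zeroIndices a x)ᶜ :=
  mem_homogeneousSolutions.2 fun i hi =>
    (mul_eq_zero.1 (h i)).resolve_left (mem_zeroIndices.not.1 (mem_compl.1 hi))

variable (ha : InGeneralPosition a) (hb : InGeneralPosition b)
  (hι : Fintype.card ι + 2 = Fintype.card α + Fintype.card β)
include ha hb hι

theorem card_zeroIndices_add_one {x : α → K} {y : β → K} (hx : x ≠ 0) (hy : y ≠ 0)
    (h : ∀ i, (a i ⬝ᵥ x) * (b i ⬝ᵥ y) = 0) :
    #(zeroIndices a x) + 1 = Fintype.card α := by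
  have hcompl : #(zeroIndices a x)ᶜ < Fintype.card β :=
    (card_le_card fun i hi => mem_zeroIndices.2 (mem_homogeneousSolutions.1
      (mem_homogeneousSolutions_compl_zeroIndices h) i hi)).trans_lt (card_zeroIndices_lt hb hy)
  have := card_zeroIndices_lt ha hx
  have := card_le_univ (zeroIndices a x)
  rw [card_compl] at hcompl
  omega

theorem eq_of_zeroIndices_eq {p p' : ℙ K (α → K)} {q q' : ℙ K (β → K)}
    (hpq : ∀ i, (a i ⬝ᵥ p.rep) * (b i ⬝ᵥ q.rep) = 0)
    (hpq' : ∀ i, (a i ⬝ᵥ p'.rep) * (b i ⬝ᵥ q'.rep) = 0)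
    (hS : zeroIndices a p.rep = zeroIndices a p'.rep) : p = p' ∧ q = q' := by
  have hcard := card_zeroIndices_add_one ha hb hι p.rep_nonzero q.rep_nonzero hpq
  constructor
  · exact (Projectivization.existsUnique_rep_mem
      (finrank_homogeneousSolutions_eq_one ha hcard)).unique
      (mem_homogeneousSolutions_zeroIndices a p.rep)
      (hS ▸ mem_homogeneousSolutions_zeroIndices a p'.rep)
  · exact (Projectivization.existsUnique_rep_mem
      (finrank_homogeneousSolutions_compl_eq_one hb hι hcard)).unique
      (mem_homogeneousSolutions_compl_zeroIndices hpq)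
      (hS ▸ mem_homogeneousSolutions_compl_zeroIndices hpq')

theorem exists_zeroIndices_eq {S : Finset ι} (hS : #S + 1 = Fintype.card α) :
    ∃ (p : ℙ K (α → K)) (q : ℙ K (β → K)),
      (∀ i, (a i ⬝ᵥ p.rep) * (b i ⬝ᵥ q.rep) = 0) ∧ zeroIndices a p.rep = S := by
  obtain ⟨p, hp⟩ := (Projectivization.existsUnique_rep_mem
    (finrank_homogeneousSolutions_eq_one ha hS)).exists
  obtain ⟨q, hq⟩ := (Projectivization.existsUnique_rep_mem
    (finrank_homogeneousSolutions_compl_eq_one hb hι hS)).exists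
  have hpq : ∀ i, (a i ⬝ᵥ p.rep) * (b i ⬝ᵥ q.rep) = 0 := fun i => by
    by_cases hi : i ∈ S
    · rw [mem_homogeneousSolutions.1 hp i hi, zero_mul]
    · rw [mem_homogeneousSolutions.1 hq i (mem_compl.2 hi), mul_zero]
  have hcard := card_zeroIndices_add_one ha hb hι p.rep_nonzero q.rep_nonzero hpq
  refine ⟨p, q, hpq, (eq_of_subset_of_card_le ?_ (by omega)).symm⟩
  exact fun i hi => mem_zeroIndices.2 (mem_homogeneousSolutions.1 hp i hi)

theorem card_solutions_eq_choose (hα : 1 ≤ Fintype.card α) :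
    Nat.card {pq : ℙ K (α → K) × ℙ K (β → K) |
        ∀ i, (a i ⬝ᵥ pq.1.rep) * (b i ⬝ᵥ pq.2.rep) = 0} =
      (Fintype.card ι).choose (Fintype.card α - 1) := by
  let f (pq : {pq : ℙ K (α → K) × ℙ K (β → K) |
      ∀ i, (a i ⬝ᵥ pq.1.rep) * (b i ⬝ᵥ pq.2.rep) = 0}) :
      {S : Finset ι // #S = Fintype.card α - 1} :=
    ⟨zeroIndices a pq.1.1.rep, by
      have := card_zeroIndices_add_one ha hb hι (Projectivization.rep_nonzero _)
        (Projectivization.rep_nonzero _) pq.2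
      omega⟩
  have hf : Function.Bijective f := by
    refine ⟨fun ⟨⟨p, q⟩, hpq⟩ ⟨⟨p', q'⟩, hpq'⟩ hS => ?_, fun ⟨S, hS⟩ => ?_⟩
    · obtain ⟨rfl, rfl⟩ := eq_of_zeroIndices_eq ha hb hι hpq hpq' (congrArg Subtype.val hS)
      rfl
    · obtain ⟨p, q, hpq, hpS⟩ := exists_zeroIndices_eq ha hb hι (S := S) (by omega)
      exact ⟨⟨(p, q), hpq⟩, Subtype.ext hpS⟩
  rw [Nat.card_eq_of_bijective f hf, Nat.card_eq_fintype_card, Fintype.card_finset_len]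

end Solutions

theorem count_segre_slice_points_general (m n : ℕ) (hm : 2 ≤ m)
    (a : Fin (m + n - 2) → Fin m → ℝ) (b : Fin (m + n - 2) → Fin n → ℝ)
    (ha : ∀ S : Finset (Fin (m + n - 2)), S.card ≤ m →
      LinearIndependent ℝ (fun i : S => a i))
    (hb : ∀ S : Finset (Fin (m + n - 2)), S.card ≤ n →
      LinearIndependent ℝ (fun i : S => b i)) :
    Nat.card {pq : ℙ ℝ (Fin m → ℝ) × ℙ ℝ (Fin n → ℝ) |
        ∀ i, (a i ⬝ᵥ pq.1.rep) * (b i ⬝ᵥ pq.2.rep) = 0} =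
      (m + n - 2).choose (m - 1) := by
  have ha' : InGeneralPosition a := by simpa [InGeneralPosition] using ha
  have hb' : InGeneralPosition b := by simpa [InGeneralPosition] using hb
  have hι : Fintype.card (Fin (m + n - 2)) + 2 = Fintype.card (Fin m) + Fintype.card (Fin n) := by
    simp only [Fintype.card_fin]
    omega
  simpa using card_solutions_eq_choose ha' hb' hι (by simp only [Fintype.card_fin]; omega)

/-- For vectors `a_1,…,a_k ∈ ℝ^m`, `b_1,…,b_k ∈ ℝ^n` in general position
(`k = m+n-2`), the number of pairs of projective points `([x],[y])` with
`(a_i ⬝ x)(b_i ⬝ y) = 0` for all `i` is exactly `C(m+n-2, m-1)`. -/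
theorem count_segre_slice_points (m n : ℕ) (hm : 2 ≤ m) (hmn : m ≤ n)
    (a : Fin (m + n - 2) → Fin m → ℝ) (b : Fin (m + n - 2) → Fin n → ℝ)
    (ha : ∀ S : Finset (Fin (m + n - 2)), S.card ≤ m →
      LinearIndependent ℝ (fun i : S => a i))
    (hb : ∀ S : Finset (Fin (m + n - 2)), S.card ≤ n →
      LinearIndependent ℝ (fun i : S => b i)) :
    Nat.card {pq : ℙ ℝ (Fin m → ℝ) × ℙ ℝ (Fin n → ℝ) |
        ∀ i, (a i ⬝ᵥ pq.1.rep) * (b i ⬝ᵥ pq.2.rep) = 0} =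
      (m + n - 2).choose (m - 1) :=
  count_segre_slice_points_general m n hm a b ha hb
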